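/- Let m ≥ 2 and d ≥ 2 be integers, c > 1 an integer, and b an integer coprime to c. Then ∑_{a ∈ (ℤ/cℤ)^{m−1}} A(d, a, c) = 0. -/

import Mathlib

open scoped BigOperators

/-- Extension of `a : Fin (m−1) → ℤ` by zero to all of `ℕ` (0-indexed). -/
def aseq (m : ℕ) (a : Fin (m - 1) → ℤ) (t : ℕ) : ℤ :=
  if h : t < m - 1 then a ⟨t, h⟩ else 0

/-- `σ_{ij}(a) = ∑_{k=i}^{j-1} a_k` (0-indexed: the sum of `a_t` for `i ≤ t < j`). -/
def sigmaSum (m : ℕ) (a : Fin (m - 1) → ℤ) (i j : ℕ) : ℤ :=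
  ∑ t ∈ Finset.Ico i j, aseq m a t

/-- `D(a) = ∏_{1 ≤ i < j ≤ m} σ_{ij}(a)`. -/
def Dprod (m : ℕ) (a : Fin (m - 1) → ℤ) : ℤ :=
  ∏ p ∈ Finset.univ.filter (fun p : Fin m × Fin m => p.1 < p.2),
    sigmaSum m a p.1.1 p.2.1

/-- `ν(d, a, c) = #{x ∈ (ℤ/cℤ)^m : b x_i^d − b x_{i+1}^d = a_i, 1 ≤ i ≤ m−1}`. -/
noncomputable def nuCount (m d : ℕ) (b : ℤ) (c : ℕ) (a : Fin (m - 1) → ℤ) : ℕ :=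
  Nat.card {x : Fin m → ZMod c //
    ∀ i : Fin (m - 1),
      (b : ZMod c) * x ⟨i.1, by have := i.isLt; omega⟩ ^ d -
        (b : ZMod c) * x ⟨i.1 + 1, by have := i.isLt; omega⟩ ^ d = ((a i : ℤ) : ZMod c)}

/-- `A(d, a, c) = ∏_{p^e ∥ c} (ν(d, a, p^e) − p^e)`, with `A(d, a, 1) = 1`. -/
noncomputable def Acoef (m d : ℕ) (b : ℤ) (c : ℕ) (a : Fin (m - 1) → ℤ) : ℤ :=
  ∏ p ∈ c.primeFactors,
    ((nuCount m d b (p ^ (c.factorization p)) a : ℤ) - (p : ℤ) ^ (c.factorization p))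

/-- `r_eff(a, p)`: the number of distinct components of a solution `y` of
`y_i − y_{i+1} = a_i (mod p)`, computed from the canonical solution `y_i = σ_{i,m}(a)`. -/
def reff (m : ℕ) (p : ℕ) (a : Fin (m - 1) → ℤ) : ℕ :=
  (Finset.image (fun i : Fin m => ((sigmaSum m a i.1 (m - 1) : ℤ) : ZMod p))
    Finset.univ).card

/-! The coefficient `A(d, a, c)` is multiplicative in `c`, so splitting off a prime power
`q = p^e ∥ c` and using the Chinese remainder theorem, the sum over `a mod c` becomes the product
of `∑_{a mod q} (ν(d, a, q) − q)` and `∑_{a mod c/q} A(d, a, c/q)`. The first factor vanishes: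
the sets counted by `ν(d, a, q)` are the fibres of the difference map
`(ℤ/qℤ)^m → (ℤ/qℤ)^{m−1}`, so the `ν(d, a, q)` add up to `q^m = q^{m−1} · q`. -/

section
variable {ι R : Type*} [Fintype ι] [DecidableEq ι] [CommSemiring R]

lemma sum_piFinset_range_eq_sum_zmod (c : ℕ) [NeZero c] (f : (ι → ℕ) → R) :
    ∑ a ∈ Fintype.piFinset (fun _ : ι => Finset.range c), f a =
      ∑ y : ι → ZMod c, f (fun i => (y i).val) := by
  refine Finset.sum_nbij' (fun a i => (a i : ZMod c)) (fun y i => (y i).val) ?_ ?_ ?_ ?_ ?_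
  · simp
  · simp [ZMod.val_lt]
  · intro a ha
    simp only [Fintype.mem_piFinset, Finset.mem_range] at ha
    exact funext fun i => ZMod.val_natCast_of_lt (ha i)
  · simp
  · intro a ha
    simp only [Fintype.mem_piFinset, Finset.mem_range] at ha
    simp only [ZMod.val_natCast_of_lt (ha _)]

lemma sum_mul_sum_of_coprime {q n : ℕ} [NeZero q] [NeZero n] (hqn : q.Coprime n)
    (F G : (ι → ℤ) → R)
    (hF : ∀ a a' : ι → ℤ, (∀ i, (a i : ZMod q) = a' i) → F a = F a')
    (hG : ∀ a a' : ι → ℤ, (∀ i, (a i : ZMod n) = a' i) → G a = G a') :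
    ∑ y : ι → ZMod (q * n), F (fun i => (y i).val) * G (fun i => (y i).val) =
      (∑ u : ι → ZMod q, F (fun i => (u i).val)) * ∑ v : ι → ZMod n, G (fun i => (v i).val) := by
  have hcast {k : ℕ} [NeZero k] (z : ZMod k) (y : ZMod (q * n)) (hz : z = ZMod.cast y) :
      ((y.val : ℤ) : ZMod k) = (z.val : ℤ) := by
    rw [Int.cast_natCast, Int.cast_natCast, ZMod.natCast_val, ZMod.natCast_val, ZMod.cast_id, hz]
  let crt : (ι → ZMod (q * n)) ≃ (ι → ZMod q) × (ι → ZMod n) :=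
    (Equiv.piCongrRight fun _ => (ZMod.chineseRemainder hqn).toEquiv).trans
      (Equiv.arrowProdEquivProdArrow _ _ _)
  rw [Finset.sum_mul_sum, ← Fintype.sum_prod_type']
  refine Fintype.sum_equiv crt _ _ fun y => ?_
  congr 1
  · exact hF _ _ fun i => hcast _ (y i) (Prod.fst_zmod_cast (y i))
  · exact hG _ _ fun i => hcast _ (y i) (Prod.snd_zmod_cast (y i))

end

section
variable (m d : ℕ) (b : ℤ)

def diffMap (q : ℕ) (x : Fin m → ZMod q) (i : Fin (m - 1)) : ZMod q :=
  (b : ZMod q) * x ⟨i.1, by omega⟩ ^ d - (b : ZMod q) * x ⟨i.1 + 1, by omega⟩ ^ d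

lemma nuCount_congr (q : ℕ) (a a' : Fin (m - 1) → ℤ) (h : ∀ i, (a i : ZMod q) = a' i) :
    nuCount m d b q a = nuCount m d b q a' :=
  Nat.card_congr <| Equiv.subtypeEquivRight fun _ => forall_congr' fun i => by rw [h i]

lemma nuCount_val_eq_card_fiber (q : ℕ) [NeZero q] (y : Fin (m - 1) → ZMod q) :
    nuCount m d b q (fun i => (y i).val) = Fintype.card {x // diffMap m d b q x = y} := by
  rw [nuCount, Nat.card_eq_fintype_card]
  refine Fintype.card_congr <| Equiv.subtypeEquivRight fun x => ?_
  simp only [funext_iff, diffMap, Int.cast_natCast, ZMod.natCast_zmod_val]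

lemma sum_nuCount_val (q : ℕ) [NeZero q] :
    ∑ y : Fin (m - 1) → ZMod q, nuCount m d b q (fun i => (y i).val) = q ^ m := by
  calc ∑ y : Fin (m - 1) → ZMod q, nuCount m d b q (fun i => (y i).val)
      = ∑ y : Fin (m - 1) → ZMod q, Fintype.card {x // diffMap m d b q x = y} :=
        Finset.sum_congr rfl fun y _ => nuCount_val_eq_card_fiber m d b q y
    _ = Fintype.card (Fin m → ZMod q) :=
        Fintype.card_sigma.symm.trans (Fintype.card_congr (Equiv.sigmaFiberEquiv _))
    _ = q ^ m := by simp [ZMod.card]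

lemma sum_nuCount_val_sub_eq_zero (hm : m ≠ 0) (q : ℕ) [NeZero q] :
    ∑ y : Fin (m - 1) → ZMod q, ((nuCount m d b q (fun i => (y i).val) : ℤ) - q) = 0 := by
  rw [Finset.sum_sub_distrib, ← Nat.cast_sum, sum_nuCount_val, Finset.sum_const,
    Finset.card_univ, Fintype.card_pi, Finset.prod_const, Finset.card_univ, Fintype.card_fin,
    ZMod.card, nsmul_eq_mul, Nat.cast_pow, Nat.cast_pow, ← pow_succ, Nat.sub_add_cancel (by omega),
    sub_self]

lemma Acoef_congr (n : ℕ) (a a' : Fin (m - 1) → ℤ) (h : ∀ i, (a i : ZMod n) = a' i) :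
    Acoef m d b n a = Acoef m d b n a' := by
  refine Finset.prod_congr rfl fun p _ => ?_
  have hdvd := Nat.ordProj_dvd n p
  rw [nuCount_congr m d b _ a a' fun i => by
    rw [← map_intCast (ZMod.castHom hdvd (ZMod (p ^ n.factorization p))), h i, map_intCast]]

lemma Acoef_mul_of_coprime {q n : ℕ} (hq : q ≠ 0) (hn : n ≠ 0) (h : q.Coprime n)
    (a : Fin (m - 1) → ℤ) : Acoef m d b (q * n) a = Acoef m d b q a * Acoef m d b n a := by
  have hfac_left : ∀ p ∈ q.primeFactors, (q * n).factorization p = q.factorization p :=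
    fun p hp => by
      rw [Nat.factorization_mul_apply_of_coprime h,
        (Finsupp.notMem_support_iff (f := n.factorization)).1, add_zero]
      rw [Nat.support_factorization]
      exact Finset.disjoint_left.1 h.disjoint_primeFactors hp
  have hfac_right : ∀ p ∈ n.primeFactors, (q * n).factorization p = n.factorization p :=
    fun p hp => by
      rw [Nat.factorization_mul_apply_of_coprime h,
        (Finsupp.notMem_support_iff (f := q.factorization)).1, zero_add]
      rw [Nat.support_factorization]
      exact Finset.disjoint_right.1 h.disjoint_primeFactors hp
  rw [Acoef, Nat.primeFactors_mul hq hn, Finset.prod_union h.disjoint_primeFactors]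
  congr 1
  · exact Finset.prod_congr rfl fun p hp => by rw [hfac_left p hp]
  · exact Finset.prod_congr rfl fun p hp => by rw [hfac_right p hp]

lemma Acoef_prime_pow {p e : ℕ} (hp : p.Prime) (he : e ≠ 0) (a : Fin (m - 1) → ℤ) :
    Acoef m d b (p ^ e) a = (nuCount m d b (p ^ e) a : ℤ) - (p : ℤ) ^ e := by
  rw [Acoef, Nat.primeFactors_prime_pow he hp, Finset.prod_singleton,
    Nat.factorization_pow_self hp]

lemma sum_Acoef_prime_pow_mul_eq_zero (hm : m ≠ 0) {p e n : ℕ} (hp : p.Prime) (he : e ≠ 0)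
    (hn : n ≠ 0) (hpn : ¬p ∣ n) :
    ∑ a ∈ Fintype.piFinset (fun _ : Fin (m - 1) => Finset.range (p ^ e * n)),
      Acoef m d b (p ^ e * n) (fun i => (a i : ℤ)) = 0 := by
  have hcop : (p ^ e).Coprime n := (hp.coprime_iff_not_dvd.2 hpn).pow_left e
  have : NeZero (p ^ e) := ⟨pow_ne_zero e hp.ne_zero⟩
  have : NeZero n := ⟨hn⟩
  calc _ = ∑ y : Fin (m - 1) → ZMod (p ^ e * n),
        ((nuCount m d b (p ^ e) (fun i => (y i).val) : ℤ) - (p ^ e : ℕ)) *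
          Acoef m d b n (fun i => (y i).val) := by
        rw [sum_piFinset_range_eq_sum_zmod]
        simp only [Acoef_mul_of_coprime m d b (NeZero.ne _) hn hcop, Acoef_prime_pow m d b hp he,
          Nat.cast_pow]
    _ = (∑ u : Fin (m - 1) → ZMod (p ^ e),
          ((nuCount m d b (p ^ e) (fun i => (u i).val) : ℤ) - (p ^ e : ℕ))) *
        ∑ v : Fin (m - 1) → ZMod n, Acoef m d b n (fun i => (v i).val) :=
        sum_mul_sum_of_coprime hcop (fun a => (nuCount m d b (p ^ e) a : ℤ) - (p ^ e : ℕ)) _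
          (fun a a' h => by rw [nuCount_congr m d b _ a a' h]) (Acoef_congr m d b n)
    _ = 0 := by rw [sum_nuCount_val_sub_eq_zero m d b hm, zero_mul]

end

theorem statement12_general (m d : ℕ) (hm : 2 ≤ m) (c : ℕ) (hc : 1 < c)
    (b : ℤ) :
    ∑ a ∈ Fintype.piFinset (fun _ : Fin (m - 1) => Finset.range c),
      Acoef m d b c (fun i => (a i : ℤ)) = 0 := by
  obtain ⟨p, hp, hpc⟩ := Nat.exists_prime_and_dvd hc.ne'
  obtain ⟨e, n, hpn, rfl⟩ := Nat.exists_eq_pow_mul_and_not_dvd (by omega : c ≠ 0) p hp.ne_one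
  have he : e ≠ 0 := by
    rintro rfl
    exact hpn (by simpa using hpc)
  exact sum_Acoef_prime_pow_mul_eq_zero m d b (by omega) hp he (by rintro rfl; omega) hpn

theorem statement12 (m d : ℕ) (hm : 2 ≤ m) (hd : 2 ≤ d) (c : ℕ) (hc : 1 < c)
    (b : ℤ) (hb : IsCoprime b ((c : ℤ))) :
    ∑ a ∈ Fintype.piFinset (fun _ : Fin (m - 1) => Finset.range c),
      Acoef m d b c (fun i => (a i : ℤ)) = 0 :=
  statement12_general m d hm c hc b
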